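/- arXiv:2005.02667 — 15 statements merged into one kernel-verified Lean document; each statement's English description precedes it below -/
import Mathlib

section
/- Let x_i ∈ [ℓ_i, u_i], x_j ∈ [ℓ_j, u_j], x_k ∈ [ℓ_k, u_k] be real numbers. Then (ℓ_k − u_k)·x_i·x_j + (ℓ_j − u_j)·x_i·x_k − u_i·x_j·x_k + u_i·u_k·x_j + (u_j·u_k − ℓ_j·ℓ_k)·x_i + u_i·u_j·x_k − u_i·u_j·u_k ≤ 0. -/
theorem stmt_0 (li ui lj uj lk uk xi xj xk : ℝ)
    (hli : 0 ≤ li)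
    (hxi : li ≤ xi) (hxi' : xi ≤ ui) (hxj : lj ≤ xj) (hxj' : xj ≤ uj)
    (hxk : lk ≤ xk) (hxk' : xk ≤ uk) :
    (lk - uk) * xi * xj + (lj - uj) * xi * xk - ui * xj * xk + ui * uk * xj + (uj * uk - lj * lk) * xi + ui * uj * xk - ui * uj * uk ≤ 0 := by
  nlinarith [mul_nonneg (mul_nonneg (sub_nonneg.2 hxi') (sub_nonneg.2 hxj')) (sub_nonneg.2 hxk'),
    mul_nonneg (hli.trans hxi) (mul_nonneg (sub_nonneg.2 hxj) (sub_nonneg.2 hxk))]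
end

section
/- Let x_i ∈ [ℓ_i, u_i], x_j ∈ [ℓ_j, u_j], x_k ∈ [ℓ_k, u_k] with 0 ≤ ℓ_j. Then (ℓ_k − u_k)·x_i·x_j − u_j·x_i·x_k + (ℓ_i − u_i)·x_j·x_k + (u_i·u_k − ℓ_i·ℓ_k)·x_j + u_j·u_k·x_i + u_i·u_j·x_k − u_i·u_j·u_k ≤ 0. -/
theorem stmt_1 (li ui lj uj lk uk xi xj xk : ℝ)
    (hlj : 0 ≤ lj)
    (hxi : li ≤ xi) (hxi' : xi ≤ ui) (hxj : lj ≤ xj) (hxj' : xj ≤ uj)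
    (hxk : lk ≤ xk) (hxk' : xk ≤ uk) :
    (lk - uk) * xi * xj - uj * xi * xk + (li - ui) * xj * xk + (ui * uk - li * lk) * xj + uj * uk * xi + ui * uj * xk - ui * uj * uk ≤ 0 := by
  nlinarith [mul_nonneg (mul_nonneg (sub_nonneg.2 hxi') (sub_nonneg.2 hxj')) (sub_nonneg.2 hxk'),
    mul_nonneg (hlj.trans hxj) (mul_nonneg (sub_nonneg.2 hxi) (sub_nonneg.2 hxk))]
end

section
/- Let x_i ∈ [ℓ_i, u_i], x_j ∈ [ℓ_j, u_j], x_k ∈ [ℓ_k, u_k] with 0 ≤ ℓ_k. Then −u_k·x_i·x_j + (ℓ_j − u_j)·x_i·x_k + (ℓ_i − u_i)·x_j·x_k + u_i·u_k·x_j + u_j·u_k·x_i + (u_i·u_j − ℓ_i·ℓ_j)·x_k − u_i·u_j·u_k ≤ 0. -/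
theorem stmt_2 (li ui lj uj lk uk xi xj xk : ℝ)
    (hlk : 0 ≤ lk)
    (hxi : li ≤ xi) (hxi' : xi ≤ ui) (hxj : lj ≤ xj) (hxj' : xj ≤ uj)
    (hxk : lk ≤ xk) (hxk' : xk ≤ uk) :
    -uk * xi * xj + (lj - uj) * xi * xk + (li - ui) * xj * xk + ui * uk * xj + uj * uk * xi + (ui * uj - li * lj) * xk - ui * uj * uk ≤ 0 := by
  have h1 : 0 ≤ (ui - xi) * (uj - xj) * (uk - xk) :=
    mul_nonneg (mul_nonneg (by linarith) (by linarith)) (by linarith)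
  have h2 : 0 ≤ xk * ((xi - li) * (xj - lj)) :=
    mul_nonneg (by linarith) (mul_nonneg (by linarith) (by linarith))
  nlinarith [h1, h2]
end

section
/- Let x_i ∈ [ℓ_i, u_i], x_j ∈ [ℓ_j, u_j], x_k ∈ [ℓ_k, u_k] with 0 ≤ ℓ_i. Then (u_j − ℓ_j)·x_i·x_k + (ℓ_k − u_k)·x_i·x_j + u_i·x_j·x_k + (ℓ_j·u_k − u_j·ℓ_k)·x_i − u_i·ℓ_k·x_j − u_i·u_j·x_k + u_i·u_j·ℓ_k ≤ 0. -/
theorem stmt_3 (li ui lj uj lk uk xi xj xk : ℝ)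
    (hli : 0 ≤ li)
    (hxi : li ≤ xi) (hxi' : xi ≤ ui) (hxj : lj ≤ xj) (hxj' : xj ≤ uj)
    (hxk : lk ≤ xk) (hxk' : xk ≤ uk) :
    (uj - lj) * xi * xk + (lk - uk) * xi * xj + ui * xj * xk + (lj * uk - uj * lk) * xi - ui * lk * xj - ui * uj * xk + ui * uj * lk ≤ 0 := by
  have hxi0 : 0 ≤ xi := hli.trans hxi
  nlinarith [mul_nonneg (mul_nonneg (sub_nonneg.2 hxi') (sub_nonneg.2 hxj')) (sub_nonneg.2 hxk),
    mul_nonneg (mul_nonneg hxi0 (sub_nonneg.2 hxk')) (sub_nonneg.2 hxj)]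
end

section
/- Let x_i ∈ [ℓ_i, u_i], x_j ∈ [ℓ_j, u_j], x_k ∈ [ℓ_k, u_k] with 0 ≤ ℓ_j. Then u_j·x_i·x_k + (ℓ_k − u_k)·x_i·x_j + (u_i − ℓ_i)·x_j·x_k − u_j·ℓ_k·x_i + (ℓ_i·u_k − u_i·ℓ_k)·x_j − u_i·u_j·x_k + u_i·u_j·ℓ_k ≤ 0. -/
theorem stmt_4 (li ui lj uj lk uk xi xj xk : ℝ)
    (hlj : 0 ≤ lj)
    (hxi : li ≤ xi) (hxi' : xi ≤ ui) (hxj : lj ≤ xj) (hxj' : xj ≤ uj)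
    (hxk : lk ≤ xk) (hxk' : xk ≤ uk) :
    uj * xi * xk + (lk - uk) * xi * xj + (ui - li) * xj * xk - uj * lk * xi + (li * uk - ui * lk) * xj - ui * uj * xk + ui * uj * lk ≤ 0 := by
  have h1 : (ui - xi) * (uj - xj) * (xk - lk) ≥ 0 :=
    mul_nonneg (mul_nonneg (by linarith) (by linarith)) (by linarith)
  have h2 : xj * (uk * xi + li * xk - uk * li - xi * xk) ≥ 0 :=
    mul_nonneg (by linarith) (by nlinarith [mul_nonneg (sub_nonneg.2 hxi) (sub_nonneg.2 hxk')])
  nlinarith [h1, h2]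
end

section
/- Let x_i ∈ [ℓ_i, u_i], x_j ∈ [ℓ_j, u_j], x_k ∈ [ℓ_k, u_k] with 0 ≤ ℓ_i. Then (u_k − ℓ_k)·x_i·x_j + u_i·x_j·x_k + (ℓ_j − u_j)·x_i·x_k − u_i·u_k·x_j + (u_j·ℓ_k − ℓ_j·u_k)·x_i − u_i·ℓ_j·x_k + u_i·ℓ_j·u_k ≤ 0. -/
theorem stmt_5 (li ui lj uj lk uk xi xj xk : ℝ)
    (hli : 0 ≤ li)
    (hxi : li ≤ xi) (hxi' : xi ≤ ui) (hxj : lj ≤ xj) (hxj' : xj ≤ uj)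
    (hxk : lk ≤ xk) (hxk' : xk ≤ uk) :
    (uk - lk) * xi * xj + ui * xj * xk + (lj - uj) * xi * xk - ui * uk * xj + (uj * lk - lj * uk) * xi - ui * lj * xk + ui * lj * uk ≤ 0 := by
  nlinarith [mul_nonneg (mul_nonneg (sub_nonneg.2 hxi') (sub_nonneg.2 hxj)) (sub_nonneg.2 hxk'),
    mul_nonneg (mul_nonneg (hli.trans hxi) (sub_nonneg.2 hxj')) (sub_nonneg.2 hxk)]
end

section
/- Let x_i ∈ [ℓ_i, u_i], x_j ∈ [ℓ_j, u_j], x_k ∈ [ℓ_k, u_k] with 0 ≤ ℓ_k. Then u_k·x_i·x_j + (u_i − ℓ_i)·x_j·x_k + (ℓ_j − u_j)·x_i·x_k − u_i·u_k·x_j − ℓ_j·u_k·x_i + (ℓ_i·u_j − u_i·ℓ_j)·x_k + u_i·ℓ_j·u_k ≤ 0. -/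
theorem stmt_6 (li ui lj uj lk uk xi xj xk : ℝ)
    (hlk : 0 ≤ lk)
    (hxi : li ≤ xi) (hxi' : xi ≤ ui) (hxj : lj ≤ xj) (hxj' : xj ≤ uj)
    (hxk : lk ≤ xk) (hxk' : xk ≤ uk) :
    uk * xi * xj + (ui - li) * xj * xk + (lj - uj) * xi * xk - ui * uk * xj - lj * uk * xi + (li * uj - ui * lj) * xk + ui * lj * uk ≤ 0 := by
  nlinarith [mul_nonneg (mul_nonneg (sub_nonneg.2 hxi') (sub_nonneg.2 hxj)) (sub_nonneg.2 hxk'),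
    mul_nonneg (hlk.trans hxk) (mul_nonneg (sub_nonneg.2 hxi') (sub_nonneg.2 hxj')),
    mul_nonneg (hlk.trans hxk) (mul_nonneg (sub_nonneg.2 hxi) (sub_nonneg.2 hxj)),
    mul_nonneg (hlk.trans hxk) (mul_nonneg (sub_nonneg.2 hxi) (sub_nonneg.2 hxj'))]
end

section
/- Let x_i ∈ [ℓ_i, u_i], x_j ∈ [ℓ_j, u_j], x_k ∈ [ℓ_k, u_k] with 0 ≤ ℓ_j. Then (u_k − ℓ_k)·x_i·x_j + (ℓ_i − u_i)·x_j·x_k + u_j·x_i·x_k + (u_i·ℓ_k − ℓ_i·u_k)·x_j − u_j·u_k·x_i − ℓ_i·u_j·x_k + ℓ_i·u_j·u_k ≤ 0. -/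
theorem stmt_7 (li ui lj uj lk uk xi xj xk : ℝ)
    (hlj : 0 ≤ lj)
    (hxi : li ≤ xi) (hxi' : xi ≤ ui) (hxj : lj ≤ xj) (hxj' : xj ≤ uj)
    (hxk : lk ≤ xk) (hxk' : xk ≤ uk) :
    (uk - lk) * xi * xj + (li - ui) * xj * xk + uj * xi * xk + (ui * lk - li * uk) * xj - uj * uk * xi - li * uj * xk + li * uj * uk ≤ 0 := by
  nlinarith [mul_nonneg (mul_nonneg (sub_nonneg.2 hxi) (sub_nonneg.2 hxj')) (sub_nonneg.2 hxk'),
    mul_nonneg (hlj.trans hxj) (mul_nonneg (sub_nonneg.2 hxi') (sub_nonneg.2 hxk)),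
    mul_nonneg (hlj.trans hxj) (mul_nonneg (sub_nonneg.2 hxi) (sub_nonneg.2 hxk'))]
end

section
/- Let x_i ∈ [ℓ_i, u_i], x_j ∈ [ℓ_j, u_j], x_k ∈ [ℓ_k, u_k] with 0 ≤ ℓ_k. Then u_k·x_i·x_j + (ℓ_i − u_i)·x_j·x_k + (u_j − ℓ_j)·x_i·x_k − ℓ_i·u_k·x_j − u_j·u_k·x_i + (u_i·ℓ_j − ℓ_i·u_j)·x_k + ℓ_i·u_j·u_k ≤ 0. -/
theorem stmt_8 (li ui lj uj lk uk xi xj xk : ℝ)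
    (hlk : 0 ≤ lk)
    (hxi : li ≤ xi) (hxi' : xi ≤ ui) (hxj : lj ≤ xj) (hxj' : xj ≤ uj)
    (hxk : lk ≤ xk) (hxk' : xk ≤ uk) :
    uk * xi * xj + (li - ui) * xj * xk + (uj - lj) * xi * xk - li * uk * xj - uj * uk * xi + (ui * lj - li * uj) * xk + li * uj * uk ≤ 0 := by
  nlinarith [mul_nonneg (mul_nonneg (sub_nonneg.2 hxi) (sub_nonneg.2 hxj')) (sub_nonneg.2 hxk'),
    mul_nonneg (hlk.trans hxk) (mul_nonneg (sub_nonneg.2 hxi') (sub_nonneg.2 hxj)),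
    mul_nonneg (hlk.trans hxk) (mul_nonneg (sub_nonneg.2 hxi) (sub_nonneg.2 hxj'))]
end

section
/- Let x_i ∈ [ℓ_i, u_i], x_j ∈ [ℓ_j, u_j], x_k ∈ [ℓ_k, u_k] with 0 ≤ ℓ_i. Then −u_i·x_j·x_k + (u_j − ℓ_j)·x_i·x_k + (u_k − ℓ_k)·x_i·x_j + u_i·ℓ_k·x_j + (ℓ_j·ℓ_k − u_j·u_k)·x_i + u_i·ℓ_j·x_k − u_i·ℓ_j·ℓ_k ≤ 0. -/
theorem stmt_9 (li ui lj uj lk uk xi xj xk : ℝ)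
    (hli : 0 ≤ li)
    (hxi : li ≤ xi) (hxi' : xi ≤ ui) (hxj : lj ≤ xj) (hxj' : xj ≤ uj)
    (hxk : lk ≤ xk) (hxk' : xk ≤ uk) :
    -ui * xj * xk + (uj - lj) * xi * xk + (uk - lk) * xi * xj + ui * lk * xj + (lj * lk - uj * uk) * xi + ui * lj * xk - ui * lj * lk ≤ 0 := by
  nlinarith [mul_nonneg (mul_nonneg (sub_nonneg.2 hxi') (sub_nonneg.2 hxj)) (sub_nonneg.2 hxk),
    mul_nonneg (hli.trans hxi) (mul_nonneg (sub_nonneg.2 hxj') (sub_nonneg.2 hxk'))]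
end

section
/- Let x_i ∈ [ℓ_i, u_i], x_j ∈ [ℓ_j, u_j], x_k ∈ [ℓ_k, u_k] with 0 ≤ ℓ_j. Then (u_i − ℓ_i)·x_j·x_k − u_j·x_i·x_k + (u_k − ℓ_k)·x_i·x_j + (ℓ_i·ℓ_k − u_i·u_k)·x_j + u_j·ℓ_k·x_i + ℓ_i·u_j·x_k − ℓ_i·u_j·ℓ_k ≤ 0. -/
theorem stmt_10 (li ui lj uj lk uk xi xj xk : ℝ)
    (hlj : 0 ≤ lj)
    (hxi : li ≤ xi) (hxi' : xi ≤ ui) (hxj : lj ≤ xj) (hxj' : xj ≤ uj)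
    (hxk : lk ≤ xk) (hxk' : xk ≤ uk) :
    (ui - li) * xj * xk - uj * xi * xk + (uk - lk) * xi * xj + (li * lk - ui * uk) * xj + uj * lk * xi + li * uj * xk - li * uj * lk ≤ 0 := by
  nlinarith [mul_nonneg (mul_nonneg (sub_nonneg.2 hxi) (sub_nonneg.2 hxj')) (sub_nonneg.2 hxk),
    mul_nonneg (hlj.trans hxj) (mul_nonneg (sub_nonneg.2 hxi') (sub_nonneg.2 hxk'))]
end

section
/- Let x_i ∈ [ℓ_i, u_i], x_j ∈ [ℓ_j, u_j], x_k ∈ [ℓ_k, u_k] with 0 ≤ ℓ_k. Then −u_k·x_i·x_j + (u_i − ℓ_i)·x_j·x_k + (u_j − ℓ_j)·x_i·x_k + ℓ_i·u_k·x_j + ℓ_j·u_k·x_i + (ℓ_i·ℓ_j − u_i·u_j)·x_k − ℓ_i·ℓ_j·u_k ≤ 0. -/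
theorem stmt_11 (li ui lj uj lk uk xi xj xk : ℝ)
    (hlk : 0 ≤ lk)
    (hxi : li ≤ xi) (hxi' : xi ≤ ui) (hxj : lj ≤ xj) (hxj' : xj ≤ uj)
    (hxk : lk ≤ xk) (hxk' : xk ≤ uk) :
    -uk * xi * xj + (ui - li) * xj * xk + (uj - lj) * xi * xk + li * uk * xj + lj * uk * xi + (li * lj - ui * uj) * xk - li * lj * uk ≤ 0 := by
  have h1 : (xi - li) * (xj - lj) * (uk - xk) ≥ 0 :=
    mul_nonneg (mul_nonneg (by linarith) (by linarith)) (by linarith)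
  have h2 : xk * ((ui - xi) * (uj - xj)) ≥ 0 :=
    mul_nonneg (by linarith) (mul_nonneg (by linarith) (by linarith))
  nlinarith [h1, h2]
end

section
/- Let ℓ_i < u_i, ℓ_j < u_j, ℓ_k < u_k be real numbers with ℓ_i, ℓ_j, ℓ_k ≥ 0. Define x_i = (u_i + ℓ_i)/2, x_j = (u_j + ℓ_j)/2, x_k = (u_k + ℓ_k)/2, Y_ij = (u_i·ℓ_j + ℓ_i·u_j)/2, Y_ik = (ℓ_i·u_k + u_i·ℓ_k)/2, Y_jk = (u_j·ℓ_k + ℓ_j·u_k)/2. Then (x, Y) satisfies all twelve McCormick inequalities for the three pairs (i,j), (i,k), (j,k) (namely Y_pq ≤ u_q·x_p + ℓ_p·x_q − u_q·ℓ_p, Y_pq ≤ u_p·x_q + ℓ_q·x_p − u_p·ℓ_q, Y_pq ≥ u_q·x_p + u_p·x_q − u_p·u_q, Y_pq ≥ ℓ_q·x_p + ℓ_p·x_q − ℓ_p·ℓ_q), but violates the linearized General Triangle inequality (T1): (ℓ_k − u_k)·Y_ij + (ℓ_j − u_j)·Y_ik − u_i·Y_jk + u_i·u_k·x_j + (u_j·u_k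 − ℓ_j·ℓ_k)·x_i + u_i·u_j·x_k − u_i·u_j·u_k > 0. -/
theorem stmt_12 (li ui lj uj lk uk xi xj xk Yij Yik Yjk : ℝ)
    (hi : li < ui) (hj : lj < uj) (hk : lk < uk)
    (hli : 0 ≤ li) (hlj : 0 ≤ lj) (hlk : 0 ≤ lk)
    (hxi : xi = (ui + li) / 2) (hxj : xj = (uj + lj) / 2) (hxk : xk = (uk + lk) / 2)
    (hYij : Yij = (ui * lj + li * uj) / 2)
    (hYik : Yik = (li * uk + ui * lk) / 2)
    (hYjk : Yjk = (uj * lk + lj * uk) / 2) :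
    (Yij ≤ uj * xi + li * xj - uj * li ∧
     Yij ≤ ui * xj + lj * xi - ui * lj ∧
     Yij ≥ uj * xi + ui * xj - ui * uj ∧
     Yij ≥ lj * xi + li * xj - li * lj) ∧
    (Yik ≤ uk * xi + li * xk - uk * li ∧
     Yik ≤ ui * xk + lk * xi - ui * lk ∧
     Yik ≥ uk * xi + ui * xk - ui * uk ∧
     Yik ≥ lk * xi + li * xk - li * lk) ∧
    (Yjk ≤ uk * xj + lj * xk - uk * lj ∧
     Yjk ≤ uj * xk + lk * xj - uj * lk ∧
     Yjk ≥ uk * xj + uj * xk - uj * uk ∧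
     Yjk ≥ lk * xj + lj * xk - lj * lk) ∧
    (lk - uk) * Yij + (lj - uj) * Yik - ui * Yjk + ui * uk * xj
      + (uj * uk - lj * lk) * xi + ui * uj * xk - ui * uj * uk > 0 := by
  subst hxi hxj hxk hYij hYik hYjk
  refine ⟨⟨by nlinarith, by nlinarith, by nlinarith, by nlinarith⟩,
          ⟨by nlinarith, by nlinarith, by nlinarith, by nlinarith⟩,
          ⟨by nlinarith, by nlinarith, by nlinarith, by nlinarith⟩, ?_⟩
  nlinarith [mul_pos (mul_pos (sub_pos.2 hi) (sub_pos.2 hj)) (sub_pos.2 hk)]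
end

section
/- Let ℓ_i < u_i, ℓ_j < u_j, ℓ_k < u_k with all lower bounds nonnegative. With the midpoint x-values x_p = (u_p + ℓ_p)/2 and Y_ij = (u_i·ℓ_j + ℓ_i·u_j)/2, Y_ik = (u_i·u_k + ℓ_i·ℓ_k)/2, Y_jk = (u_j·u_k + ℓ_j·ℓ_k)/2, the point (x, Y) satisfies all McCormick inequalities for the pairs (i,j), (i,k), (j,k), but violates the linearized inequality (T4): (u_j − ℓ_j)·Y_ik + (ℓ_k − u_k)·Y_ij + u_i·Y_jk + (ℓ_j·u_k − u_j·ℓ_k)·x_i − u_i·ℓ_k·x_j − u_i·u_j·x_k + u_i·u_j·ℓ_k > 0. -/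
theorem stmt_13 (li ui lj uj lk uk xi xj xk Yij Yik Yjk : ℝ)
    (hi : li < ui) (hj : lj < uj) (hk : lk < uk)
    (hli : 0 ≤ li) (hlj : 0 ≤ lj) (hlk : 0 ≤ lk)
    (hxi : xi = (ui + li) / 2) (hxj : xj = (uj + lj) / 2) (hxk : xk = (uk + lk) / 2)
    (hYij : Yij = (ui * lj + li * uj) / 2)
    (hYik : Yik = (ui * uk + li * lk) / 2)
    (hYjk : Yjk = (uj * uk + lj * lk) / 2) :
    (Yij ≤ uj * xi + li * xj - uj * li ∧
     Yij ≤ ui * xj + lj * xi - ui * lj ∧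
     Yij ≥ uj * xi + ui * xj - ui * uj ∧
     Yij ≥ lj * xi + li * xj - li * lj) ∧
    (Yik ≤ uk * xi + li * xk - uk * li ∧
     Yik ≤ ui * xk + lk * xi - ui * lk ∧
     Yik ≥ uk * xi + ui * xk - ui * uk ∧
     Yik ≥ lk * xi + li * xk - li * lk) ∧
    (Yjk ≤ uk * xj + lj * xk - uk * lj ∧
     Yjk ≤ uj * xk + lk * xj - uj * lk ∧
     Yjk ≥ uk * xj + uj * xk - uj * uk ∧
     Yjk ≥ lk * xj + lj * xk - lj * lk) ∧
    (uj - lj) * Yik + (lk - uk) * Yij + ui * Yjk + (lj * uk - uj * lk) * xi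
      - ui * lk * xj - ui * uj * xk + ui * uj * lk > 0 := by
  subst hxi hxj hxk hYij hYik hYjk
  have di : 0 < ui - li := by linarith
  have dj : 0 < uj - lj := by linarith
  have dk : 0 < uk - lk := by linarith
  refine ⟨⟨by nlinarith, by nlinarith, by nlinarith, by nlinarith⟩,
    ⟨by nlinarith, by nlinarith, by nlinarith, by nlinarith⟩,
    ⟨by nlinarith, by nlinarith, by nlinarith, by nlinarith⟩, by nlinarith [mul_pos (mul_pos di dj) dk]⟩
end

section
/- Let x_i, x_k, Y_ik, Y_ij, x_j be real numbers, let u_j ≥ ℓ_j and ℓ_k ≥ 0, and suppose the McCormick inequalities Y_ik ≤ u_i·x_k + ℓ_k·x_i − u_i·ℓ_k and Y_ij ≤ ℓ_j·x_i + u_i·x_j − u_i·ℓ_j hold. Then (u_j − ℓ_j)·Y_ik + ℓ_k·Y_ij − u_j·ℓ_k·x_i − u_i·ℓ_k·x_j + u_i·(ℓ_j − u_j)·x_k + u_i·u_j·ℓ_k ≤ 0. -/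
theorem stmt_15 (ui lj uj lk xi xj xk Yik Yij : ℝ)
    (hj : lj ≤ uj) (hlk : 0 ≤ lk)
    (h1 : Yik ≤ ui * xk + lk * xi - ui * lk)
    (h2 : Yij ≤ lj * xi + ui * xj - ui * lj) :
    (uj - lj) * Yik + lk * Yij - uj * lk * xi - ui * lk * xj
      + ui * (lj - uj) * xk + ui * uj * lk ≤ 0 := by
  nlinarith [mul_nonneg (sub_nonneg.2 hj) (sub_nonneg.2 h1), mul_nonneg hlk (sub_nonneg.2 h2)]
end
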